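/- arXiv:2402.19455 — 3 statements merged into one kernel-verified Lean document; each statement's English description precedes it below -/
import Mathlib

section
/- Suppose π(φ, x) is a joint probability density on Φ × X with conditionals π(φ | x) = p(φ | x) and π(x | φ) = q(x | φ), where p(φ, x) is another joint density with the same φ-conditional p(φ | x) and marginal p(x). Assume all densities are strictly positive. Then for every φ, the ratio of marginals satisfies p(φ)/π(φ) = ∫_X [q(x | φ)/p(x | φ)] p(x) dx. -/
open MeasureTheory

/-! Since `π'` and `p` share the `φ`-conditional, `π'(φ, x) p(x) / p(φ, x) = π'(x)`. Hence the
integrand equals `(p(φ) / π'(φ)) π'(x)`, and integrating out `x` leaves `p(φ) / π'(φ)`. -/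

/-- If `c` or `d` is zero, the junk value `x / 0 = 0` forces `b = 0`. -/
theorem mul_div_eq_of_div_eq_div {G : Type*} [CommGroupWithZero G] {a b c d : G} (ha : a ≠ 0)
    (h : a / b = c / d) : a * d / c = b := by
  by_cases hc : c = 0
  · rw [hc, zero_div, div_eq_zero_iff] at h
    simp [hc, h.resolve_left ha]
  by_cases hd : d = 0
  · rw [hd, div_zero, div_eq_zero_iff] at h
    simp [hd, h.resolve_left ha]
  have hb : b ≠ 0 := by
    rintro rfl
    exact div_ne_zero hc hd (by rw [← h, div_zero])
  rw [div_eq_div_iff hb hd] at h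
  rw [h, mul_div_cancel_left₀ b hc]

theorem stmt_6_general {Φ X : Type*} [MeasurableSpace Φ] [MeasurableSpace X]
    (μ : Measure Φ) (ν : Measure X) [SigmaFinite μ] [SigmaFinite ν]
    (p π' : Φ × X → ℝ) (q : Φ → X → ℝ)
    (hπ'pos : ∀ z, 0 < π' z)
    (hπ'int : Integrable π' (μ.prod ν))
    (hπ'1 : ∫ z, π' z ∂(μ.prod ν) = 1)
    (pX π'X : X → ℝ) (pΦ π'Φ : Φ → ℝ)
    (hπ'X : ∀ x, π'X x = ∫ φ, π' (φ, x) ∂μ)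
    (hshared : ∀ φ x, π' (φ, x) / π'X x = p (φ, x) / pX x)
    (hq : ∀ φ x, π' (φ, x) / π'Φ φ = q φ x) :
    ∀ φ, pΦ φ / π'Φ φ = ∫ x, (q φ x / (p (φ, x) / pΦ φ)) * pX x ∂ν := by
  intro φ
  have hmarginal : ∫ x, π'X x ∂ν = 1 := by
    simp_rw [hπ'X]
    rw [← integral_prod_symm _ hπ'int, hπ'1]
  have hintegrand : ∀ x, q φ x / (p (φ, x) / pΦ φ) * pX x = pΦ φ / π'Φ φ * π'X x := by
    intro x
    rw [← hq, ← mul_div_eq_of_div_eq_div (hπ'pos (φ, x)).ne' (hshared φ x)]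
    rw [div_div_eq_mul_div]
    ring
  simp_rw [hintegrand]
  rw [integral_const_mul, hmarginal, mul_one]

/-- If `π'` and `p` are strictly positive joint densities on `Φ × X` sharing the
same `φ`-conditional, and the `x`-conditional of `π'` is `q`, then for every `φ`,
`p(φ)/π'(φ) = ∫ (q(x|φ)/p(x|φ)) p(x) dx`. -/
theorem stmt_6 {Φ X : Type*} [MeasurableSpace Φ] [MeasurableSpace X]
    (μ : Measure Φ) (ν : Measure X) [SigmaFinite μ] [SigmaFinite ν]
    (p π' : Φ × X → ℝ) (q : Φ → X → ℝ)
    (hpm : Measurable p) (hπ'm : Measurable π')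
    (hppos : ∀ z, 0 < p z) (hπ'pos : ∀ z, 0 < π' z)
    (hpint : Integrable p (μ.prod ν)) (hπ'int : Integrable π' (μ.prod ν))
    (hp1 : ∫ z, p z ∂(μ.prod ν) = 1) (hπ'1 : ∫ z, π' z ∂(μ.prod ν) = 1)
    (pX π'X : X → ℝ) (pΦ π'Φ : Φ → ℝ)
    (hpX : ∀ x, pX x = ∫ φ, p (φ, x) ∂μ) (hπ'X : ∀ x, π'X x = ∫ φ, π' (φ, x) ∂μ)
    (hpΦ : ∀ φ, pΦ φ = ∫ x, p (φ, x) ∂ν) (hπ'Φ : ∀ φ, π'Φ φ = ∫ x, π' (φ, x) ∂ν)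
    (hshared : ∀ φ x, π' (φ, x) / π'X x = p (φ, x) / pX x)
    (hq : ∀ φ x, π' (φ, x) / π'Φ φ = q φ x) :
    ∀ φ, pΦ φ / π'Φ φ = ∫ x, (q φ x / (p (φ, x) / pΦ φ)) * pX x ∂ν :=
  stmt_6_general μ ν p π' q hπ'pos hπ'int hπ'1 pX π'X pΦ π'Φ hπ'X hshared hq
end

section
/- Under the hypotheses of the previous statement (π and p strictly positive joint densities on Φ × X sharing the conditional p(φ | x), with π(x | φ) = q(x | φ)), the Kullback–Leibler divergence between the φ-marginals satisfies KL(p(φ) ‖ π(φ)) = E_{φ ∼ p(φ)} [ log E_{x ∼ p(x)} ( q(x|φ) / p(x|φ) ) ]. -/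
open MeasureTheory Real

/-! Since `π'` and `p` share the conditional of `φ` given `x`, `π'(φ, x) p(x) = p(φ, x) π'(x)`.
Hence `q(x|φ) / p(x|φ) · p(x) = p(φ) / π'(φ) · π'(x)`, and integrating against `ν` leaves
`p(φ) / π'(φ)`, because the marginal `π'(x)` has total mass one. -/

lemma mul_eq_mul_of_div_eq_div_of_num_ne_zero {G₀ : Type*} [CommGroupWithZero G₀] {a b c d : G₀}
    (ha : a ≠ 0) (hb : b ≠ 0) (h : a / c = b / d) : a * d = b * c := by
  by_cases hc : c = 0
  · have hd : d = 0 := by simpa [hc, hb] using h.symm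
    simp [hc, hd]
  · have hd : d ≠ 0 := by
      rintro rfl
      simp [ha, hc] at h
    exact mul_eq_mul_of_div_eq_div a b hc hd h

theorem stmt_7_general {Φ X : Type*} [MeasurableSpace Φ] [MeasurableSpace X]
    (μ : Measure Φ) (ν : Measure X) [SigmaFinite μ] [SigmaFinite ν]
    (p π' : Φ × X → ℝ) (q : Φ → X → ℝ)
    (hppos : ∀ z, 0 < p z) (hπ'pos : ∀ z, 0 < π' z)
    (hπ'int : Integrable π' (μ.prod ν))
    (hπ'1 : ∫ z, π' z ∂(μ.prod ν) = 1)
    (pX π'X : X → ℝ) (pΦ π'Φ : Φ → ℝ)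
    (hπ'X : ∀ x, π'X x = ∫ φ, π' (φ, x) ∂μ)
    (hshared : ∀ φ x, π' (φ, x) / π'X x = p (φ, x) / pX x)
    (hq : ∀ φ x, π' (φ, x) / π'Φ φ = q φ x) :
    ∫ φ, pΦ φ * Real.log (pΦ φ / π'Φ φ) ∂μ
      = ∫ φ, pΦ φ * Real.log (∫ x, (q φ x / (p (φ, x) / pΦ φ)) * pX x ∂ν) ∂μ := by
  have hcross : ∀ φ x, π' (φ, x) * pX x = p (φ, x) * π'X x := fun φ x =>
    mul_eq_mul_of_div_eq_div_of_num_ne_zero (hπ'pos _).ne' (hppos _).ne' (hshared φ x)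
  have hπ'X1 : ∫ x, π'X x ∂ν = 1 := by
    simp_rw [hπ'X]
    rw [← integral_prod_symm π' hπ'int, hπ'1]
  have hinner : ∀ φ x, q φ x / (p (φ, x) / pΦ φ) * pX x = pΦ φ / π'Φ φ * π'X x := by
    intro φ x
    calc q φ x / (p (φ, x) / pΦ φ) * pX x
        = pΦ φ / π'Φ φ * (π' (φ, x) * pX x / p (φ, x)) := by rw [← hq, div_div_eq_mul_div]; ring
      _ = pΦ φ / π'Φ φ * π'X x := by rw [hcross, mul_div_cancel_left₀ _ (hppos _).ne']
  simp_rw [hinner, integral_const_mul, hπ'X1, mul_one]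

/-- Under the hypotheses of Statement 6, the Kullback–Leibler divergence between
the `φ`-marginals satisfies
`KL(p(φ) ‖ π'(φ)) = E_{φ ∼ p(φ)} [ log E_{x ∼ p(x)} ( q(x|φ) / p(x|φ) ) ]`. -/
theorem stmt_7 {Φ X : Type*} [MeasurableSpace Φ] [MeasurableSpace X]
    (μ : Measure Φ) (ν : Measure X) [SigmaFinite μ] [SigmaFinite ν]
    (p π' : Φ × X → ℝ) (q : Φ → X → ℝ)
    (hpm : Measurable p) (hπ'm : Measurable π')
    (hppos : ∀ z, 0 < p z) (hπ'pos : ∀ z, 0 < π' z)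
    (hpint : Integrable p (μ.prod ν)) (hπ'int : Integrable π' (μ.prod ν))
    (hp1 : ∫ z, p z ∂(μ.prod ν) = 1) (hπ'1 : ∫ z, π' z ∂(μ.prod ν) = 1)
    (pX π'X : X → ℝ) (pΦ π'Φ : Φ → ℝ)
    (hpX : ∀ x, pX x = ∫ φ, p (φ, x) ∂μ) (hπ'X : ∀ x, π'X x = ∫ φ, π' (φ, x) ∂μ)
    (hpΦ : ∀ φ, pΦ φ = ∫ x, p (φ, x) ∂ν) (hπ'Φ : ∀ φ, π'Φ φ = ∫ x, π' (φ, x) ∂ν)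
    (hshared : ∀ φ x, π' (φ, x) / π'X x = p (φ, x) / pX x)
    (hq : ∀ φ x, π' (φ, x) / π'Φ φ = q φ x) :
    ∫ φ, pΦ φ * Real.log (pΦ φ / π'Φ φ) ∂μ
      = ∫ φ, pΦ φ * Real.log (∫ x, (q φ x / (p (φ, x) / pΦ φ)) * pX x ∂ν) ∂μ :=
  stmt_7_general μ ν p π' q hppos hπ'pos hπ'int hπ'1 pX π'X pΦ π'Φ hπ'X hshared hq
end

section
/- Let f(φ | x) and g(x | φ) be conditional densities of a joint density π(φ, x) with strictly positive marginals. Then for almost every φ, π(φ) = ( ∫_X g(x | φ)/f(φ | x) dx )^{−1}; in particular the integral ∫_X g(x|φ)/f(φ|x) dx is finite for almost every φ. -/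
open MeasureTheory Real

/-! Dividing the two conditionals cancels the joint density: `g(x|φ) / f(φ|x) = π(x) / π(φ)`.
By Fubini the `X`-marginal has total mass `1`, so the integral over `x`
equals `1 / π(φ)`. -/

theorem stmt_10_general {Φ X : Type*} [MeasurableSpace Φ] [MeasurableSpace X]
    (μ : Measure Φ) (ν : Measure X) [SigmaFinite μ] [SigmaFinite ν]
    (π' : Φ × X → ℝ) (hπ'pos : ∀ z, 0 < π' z)
    (hπ'int : Integrable π' (μ.prod ν)) (hπ'1 : ∫ z, π' z ∂(μ.prod ν) = 1)
    (π'Φ : Φ → ℝ) (π'X : X → ℝ)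
    (hπ'X : ∀ x, π'X x = ∫ φ, π' (φ, x) ∂μ)
    (f g : Φ → X → ℝ)
    (hf : ∀ φ x, f φ x = π' (φ, x) / π'X x)
    (hg : ∀ φ x, g φ x = π' (φ, x) / π'Φ φ) :
    ∀ᵐ φ ∂μ, Integrable (fun x => g φ x / f φ x) ν ∧
      π'Φ φ = (∫ x, g φ x / f φ x ∂ν)⁻¹ := by
  have hX : π'X = fun x => ∫ φ, π' (φ, x) ∂μ := funext hπ'X
  have hXint : Integrable π'X ν := hX ▸ hπ'int.integral_prod_right
  have hXmass : ∫ x, π'X x ∂ν = 1 := by rw [hX, ← integral_prod_symm _ hπ'int, hπ'1]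
  have hratio : ∀ φ x, g φ x / f φ x = π'X x / π'Φ φ := fun φ x => by
    rw [hf, hg, div_div_div_cancel_left' _ _ (hπ'pos _).ne']
  refine .of_forall fun φ => ?_
  simp_rw [hratio φ]
  exact ⟨hXint.div_const _, by rw [integral_div, hXmass, one_div, inv_inv]⟩

/-- If `f(φ|x)` and `g(x|φ)` are the conditional densities of a joint density
`π'` with strictly positive marginals, then for almost every `φ`,
`π'(φ) = (∫ g(x|φ)/f(φ|x) dx)⁻¹`; in particular the integral is finite for a.e. `φ`. -/
theorem stmt_10 {Φ X : Type*} [MeasurableSpace Φ] [MeasurableSpace X]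
    (μ : Measure Φ) (ν : Measure X) [SigmaFinite μ] [SigmaFinite ν]
    (π' : Φ × X → ℝ) (hπ'm : Measurable π') (hπ'pos : ∀ z, 0 < π' z)
    (hπ'int : Integrable π' (μ.prod ν)) (hπ'1 : ∫ z, π' z ∂(μ.prod ν) = 1)
    (π'Φ : Φ → ℝ) (π'X : X → ℝ)
    (hπ'Φ : ∀ φ, π'Φ φ = ∫ x, π' (φ, x) ∂ν) (hπ'X : ∀ x, π'X x = ∫ φ, π' (φ, x) ∂μ)
    (hπ'Φpos : ∀ φ, 0 < π'Φ φ) (hπ'Xpos : ∀ x, 0 < π'X x)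
    (f g : Φ → X → ℝ)
    (hf : ∀ φ x, f φ x = π' (φ, x) / π'X x)
    (hg : ∀ φ x, g φ x = π' (φ, x) / π'Φ φ) :
    ∀ᵐ φ ∂μ, Integrable (fun x => g φ x / f φ x) ν ∧
      π'Φ φ = (∫ x, g φ x / f φ x ∂ν)⁻¹ :=
  stmt_10_general μ ν π' hπ'pos hπ'int hπ'1 π'Φ π'X hπ'X f g hf hg
end
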